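/- Let b, c be integers and n ∈ ℕ, and let T_n(b,c) denote the coefficient of x^n in the expansion of (x^2 + b x + c)^n. Then T_n(b,c) = Σ_{k=0}^{⌊n/2⌋} C(n,2k)·C(2k,k)·b^{n−2k}·c^k. -/

import Mathlib

/-!
Split `x² + bx + c = (x² + c) + bx` and expand binomially: the term `C(n,m) (x² + c)^m (bx)^(n-m)`
contributes `C(n,m) b^(n-m)` times the middle coefficient of `(x² + c)^m`. Since `(x² + c)^m` is
`(x + c)^m` with `x` replaced by `x²`, that middle coefficient vanishes for odd `m` and equals
`C(2k,k) c^k` for `m = 2k`.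
-/

open Polynomial Finset

theorem Finset.sum_range_succ_ite_two_dvd {M : Type*} [AddCommMonoid M] (f : ℕ → M) (n : ℕ) :
    ∑ m ∈ range (n + 1), (if 2 ∣ m then f m else 0) = ∑ k ∈ range (n / 2 + 1), f (2 * k) := by
  rw [← sum_filter]
  have hevens : {m ∈ range (n + 1) | 2 ∣ m}
      = (range (n / 2 + 1)).map ⟨(2 * ·), mul_right_injective₀ two_ne_zero⟩ := by
    ext m
    simp only [mem_filter, mem_range, mem_map, Function.Embedding.coeFn_mk]
    constructor
    · rintro ⟨hm, k, rfl⟩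
      exact ⟨k, by omega, rfl⟩
    · rintro ⟨k, hk, rfl⟩
      exact ⟨by omega, dvd_mul_right 2 k⟩
  rw [hevens, sum_map]
  rfl

namespace Polynomial

variable {R : Type*} [CommSemiring R]

theorem coeff_add_C_mul_X_pow_self (p : R[X]) (b : R) (n : ℕ) :
    ((p + C b * X) ^ n).coeff n
      = ∑ m ∈ range (n + 1), (n.choose m : R) * b ^ (n - m) * (p ^ m).coeff m := by
  rw [add_pow, finsetSum_coeff]
  refine sum_congr rfl fun m hm => ?_
  have hnm : n - (n - m) = m := by rw [mem_range] at hm; omega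
  calc (p ^ m * (C b * X) ^ (n - m) * (n.choose m : R[X])).coeff n
      = (C ((n.choose m : R) * b ^ (n - m)) * (p ^ m * X ^ (n - m))).coeff n := by
        rw [C_mul, C_pow, mul_pow, ← C_eq_natCast]
        congr 1; ring
    _ = (n.choose m : R) * b ^ (n - m) * (p ^ m).coeff m := by
        rw [coeff_C_mul, coeff_mul_X_pow', if_pos (Nat.sub_le n m), hnm]

theorem coeff_X_pow_two_add_C_pow_self (c : R) (m : ℕ) :
    ((X ^ 2 + C c) ^ m).coeff m = if 2 ∣ m then (m.choose (m / 2) : R) * c ^ (m / 2) else 0 := by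
  have : (X ^ 2 + C c : R[X]) ^ m = expand R 2 ((X + C c) ^ m) := by simp
  rw [this, coeff_expand two_pos, coeff_X_add_C_pow]
  split_ifs with h
  · obtain ⟨k, rfl⟩ := h
    rw [Nat.mul_div_cancel_left k two_pos, two_mul, Nat.add_sub_cancel, mul_comm]
  · rfl

end Polynomial

open Polynomial in
theorem generalized_central_trinomial_formula (b c : ℤ) (n : ℕ) :
    ((X ^ 2 + C b * X + C c : Polynomial ℤ) ^ n).coeff n
      = ∑ k ∈ Finset.range (n / 2 + 1),
          (Nat.choose n (2 * k) * Nat.choose (2 * k) k : ℤ) * b ^ (n - 2 * k) * c ^ k := by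
  rw [add_right_comm, coeff_add_C_mul_X_pow_self]
  simp_rw [coeff_X_pow_two_add_C_pow_self, mul_ite, mul_zero]
  rw [Finset.sum_range_succ_ite_two_dvd]
  refine Finset.sum_congr rfl fun k _ => ?_
  rw [Nat.mul_div_cancel_left k two_pos]
  ring
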